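/- For every positive integer k, the sequence of iterates k, z(k), z(z(k)), ... of the Fibonacci entry point function eventually reaches a fixed point of z. -/

import Mathlib

/-- The Fibonacci entry point: least positive `m` with `n ∣ Nat.fib m`. -/
noncomputable def fibEntry (n : ℕ) : ℕ := sInf {m | 0 < m ∧ n ∣ Nat.fib m}

/-!
For a prime `p ≠ 5` the Frobenius of `𝔽̄_p` either fixes or swaps the two roots of `X² - X - 1`,
which by Binet's formula gives `z(p) ∣ p - 1` or `z(p) ∣ p + 1`. Together with `z(5) ∣ 5`,
`z(p ^ (e + 1)) ∣ p ^ e * z(p)` and `z(lcm a b) = lcm (z a) (z b)`, every prime `r > 3` dividing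
`z(n)` is at most some prime factor of `n`, and `z` lowers the exponent of the largest prime factor
`P ≥ 7` of `n`. So the orbit reaches a number `2 ^ a * 3 ^ b * 5 ^ c`. There `z` does not raise `c`,
lowers `a` while `a > 2` and `b` while `b > 1`, and once `2 ^ a * 3 ^ b ∣ 12` it does not decrease
`2 ^ a * 3 ^ b` (`1 ↦ 1` and `2 ↦ 3 ↦ 4 ↦ 6 ↦ 12 ↦ 12`), so the orbit becomes stationary.
-/

open Polynomial

namespace Function

variable {α : Type*} (f : α → α)

def ReachesFixedPt (x : α) : Prop := ∃ i, IsFixedPt f (f^[i] x)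

variable {f}

theorem IsFixedPt.reachesFixedPt {x : α} (h : IsFixedPt f x) : ReachesFixedPt f x := ⟨0, h⟩

theorem ReachesFixedPt.of_apply {x : α} (h : ReachesFixedPt f (f x)) : ReachesFixedPt f x :=
  let ⟨i, hi⟩ := h
  ⟨i + 1, by rwa [iterate_succ_apply]⟩

theorem ReachesFixedPt.of_descent {ι β : Type*} [Preorder β] [WellFoundedLT β] (g : ι → α)
    (μ : ι → β) {s : Set ι}
    (h : ∀ i ∈ s, ReachesFixedPt f (g i) ∨ ∃ j ∈ s, f (g i) = g j ∧ μ j < μ i) {i : ι}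
    (hi : i ∈ s) : ReachesFixedPt f (g i) := by
  induction i using (InvImage.wf μ wellFounded_lt).induction with
  | _ i ih =>
    obtain h | ⟨j, hj, hfg, hμ⟩ := h i hi
    · exact h
    · exact ReachesFixedPt.of_apply (hfg ▸ ih j hμ hj)

end Function

open Function

theorem fib_mul_sub_eq_pow_sub_pow {R : Type*} [CommRing R] {φ ψ : R} (hsum : φ + ψ = 1)
    (hprod : φ * ψ = -1) (n : ℕ) : (Nat.fib n : R) * (φ - ψ) = φ ^ n - ψ ^ n := by
  induction n using Nat.twoStepInduction with
  | zero => simp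
  | one => simp
  | more n ih₀ ih₁ =>
    rw [Nat.fib_add_two, Nat.cast_add]
    linear_combination ih₀ + ih₁ + (ψ ^ (n + 1) - φ ^ (n + 1)) * hsum + (φ ^ n - ψ ^ n) * hprod

theorem Nat.Prime.dvd_fib_sub_one_or_dvd_fib_add_one {p : ℕ} (hp : p.Prime) (hp5 : p ≠ 5) :
    p ∣ Nat.fib (p - 1) ∨ p ∣ Nat.fib (p + 1) := by
  have := Fact.mk hp
  let K := AlgebraicClosure (ZMod p)
  obtain ⟨φ, hφ⟩ := IsAlgClosed.exists_root (X ^ 2 - X - 1 : K[X])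
    (by rw [show (X ^ 2 - X - 1 : K[X]).degree = 2 by compute_degree!]; decide)
  replace hφ : φ ^ 2 - φ - 1 = 0 := by simpa using hφ
  set ψ := 1 - φ
  have hsum : φ + ψ = 1 := by ring
  have hprod : φ * ψ = -1 := by linear_combination -hφ
  have hroots : ∀ x : K, x ^ 2 - x - 1 = 0 → x = φ ∨ x = ψ := by
    intro x hx
    have : (x - φ) * (x - ψ) = 0 := by linear_combination hx + hprod - x * hsum
    simpa [sub_eq_zero] using this
  have hψp : ψ ^ p = 1 - φ ^ p := by simp [ψ, sub_pow_char]
  have hφp : φ ^ p = φ ∨ φ ^ p = ψ := hroots _ <| by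
    have := congrArg (· ^ p) hφ
    simp only [sub_pow_char, one_pow, zero_pow hp.ne_zero] at this
    linear_combination this
  have hsub : φ - ψ ≠ 0 := by
    have h5 : ((5 : ℕ) : K) ≠ 0 := by
      rw [Ne, CharP.cast_eq_zero_iff K p, Nat.prime_dvd_prime_iff_eq hp Nat.prime_five]
      exact hp5
    have : (φ - ψ) ^ 2 = ((5 : ℕ) : K) := by push_cast; linear_combination 4 * hφ
    exact fun h => h5 (by rw [← this, h]; ring)
  have dvd_fib {m : ℕ} (h : φ ^ m = ψ ^ m) : p ∣ Nat.fib m := by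
    rw [← CharP.cast_eq_zero_iff K p]
    simpa [h, hsub] using fib_mul_sub_eq_pow_sub_pow hsum hprod m
  obtain ⟨q, rfl⟩ : ∃ q, p = q + 1 := Nat.exists_eq_add_one_of_ne_zero hp.ne_zero
  rcases hφp with h | h
  · refine .inl (dvd_fib ?_)
    have : (φ ^ q - ψ ^ q) * (φ * ψ) = 0 := by
      linear_combination ψ * h - φ * (hψp.trans (by rw [h]))
    simpa [hprod, sub_eq_zero] using this
  · refine .inr (dvd_fib ?_)
    rw [pow_succ _ (q + 1), pow_succ _ (q + 1), h, hψp, h]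
    ring

theorem cast_fib_mul_of_sq_eq_zero {R : Type*} [CommRing R] {m : ℕ}
    (h : (Nat.fib (m + 1) : R) ^ 2 = 0) (k : ℕ) :
    (Nat.fib ((k + 1) * (m + 1)) : R) = (k + 1) * Nat.fib (m + 1) * Nat.fib (m + 2) ^ k := by
  set F : R := ((Nat.fib (m + 1) : ℕ) : R)
  set G : R := ((Nat.fib (m + 2) : ℕ) : R)
  have hG : G = Nat.fib m + F := by simp [G, F, Nat.fib_add_two]
  suffices ∀ k : ℕ, (Nat.fib (k * (m + 1) + 1) : R) = G ^ k ∧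
      (Nat.fib ((k + 1) * (m + 1)) : R) = (k + 1) * F * G ^ k from (this k).2
  intro k
  induction k with
  | zero => simp [F]
  | succ k ih =>
    have hF : (Nat.fib (k * (m + 1)) : R) * F = 0 := by
      obtain ⟨c, hc⟩ := Nat.fib_dvd _ _ (dvd_mul_left (m + 1) k)
      rw [hc, Nat.cast_mul, mul_comm, ← mul_assoc, ← sq, h, zero_mul]
    have hy : (Nat.fib ((k + 1) * (m + 1) + 1) : R) = G ^ (k + 1) := by
      rw [show (k + 1) * (m + 1) + 1 = k * (m + 1) + (m + 1) + 1 by ring, Nat.fib_add]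
      push_cast
      linear_combination hF + G * ih.1
    refine ⟨hy, ?_⟩
    rw [show (k + 1 + 1) * (m + 1) = (k + 1) * (m + 1) + m + 1 by ring, Nat.fib_add]
    push_cast
    linear_combination (Nat.fib m : R) * ih.2 + F * hy - ((k + 1) * F * G ^ k) * hG -
      ((k + 1) * G ^ k) * h

theorem pow_succ_dvd_fib_mul {p e M : ℕ} (he : e ≠ 0) (h : p ^ e ∣ Nat.fib M) :
    p ^ (e + 1) ∣ Nat.fib (p * M) := by
  obtain _ | m := M
  · simp
  obtain _ | k := p
  · simp
  have hF : (Nat.fib (m + 1) : ZMod ((k + 1) ^ (e + 1))) ^ 2 = 0 := by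
    rw [← Nat.cast_pow, ZMod.natCast_eq_zero_iff]
    exact (pow_dvd_pow _ (by omega)).trans (pow_mul' (k + 1) 2 e ▸ pow_dvd_pow_of_dvd h 2)
  have hpF : ((k + 1 : ℕ) : ZMod ((k + 1) ^ (e + 1))) * Nat.fib (m + 1) = 0 := by
    rw [← Nat.cast_mul, ZMod.natCast_eq_zero_iff, pow_succ']
    exact mul_dvd_mul_left _ h
  rw [← ZMod.natCast_eq_zero_iff, cast_fib_mul_of_sq_eq_zero hF]
  push_cast at hpF ⊢
  rw [hpF, zero_mul]

theorem pow_succ_dvd_fib_pow_mul {p m : ℕ} (h : p ∣ Nat.fib m) (e : ℕ) :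
    p ^ (e + 1) ∣ Nat.fib (p ^ e * m) := by
  induction e with
  | zero => simpa using h
  | succ e ih => simpa [pow_succ', mul_assoc] using pow_succ_dvd_fib_mul (by omega) ih

theorem exists_pos_dvd_fib {n : ℕ} (hn : n ≠ 0) : ∃ m, 0 < m ∧ n ∣ Nat.fib m := by
  induction n using Nat.recOnPosPrimePosCoprime with
  | prime_pow p e hp he =>
    obtain ⟨m, hm, hpm⟩ : ∃ m, 0 < m ∧ p ∣ Nat.fib m := by
      by_cases hp5 : p = 5
      · exact ⟨5, by norm_num, by subst hp5; decide⟩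
      rcases hp.dvd_fib_sub_one_or_dvd_fib_add_one hp5 with h | h
      · exact ⟨p - 1, by have := hp.two_le; omega, h⟩
      · exact ⟨p + 1, by omega, h⟩
    obtain ⟨e, rfl⟩ := Nat.exists_eq_add_one_of_ne_zero he.ne'
    exact ⟨p ^ e * m, Nat.mul_pos (pow_pos hp.pos e) hm, pow_succ_dvd_fib_pow_mul hpm e⟩
  | zero => exact absurd rfl hn
  | one => exact ⟨1, one_pos, one_dvd _⟩
  | coprime a b ha hb hab iha ihb =>
    obtain ⟨ma, hma, hda⟩ := iha (by omega)
    obtain ⟨mb, hmb, hdb⟩ := ihb (by omega)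
    exact ⟨ma * mb, Nat.mul_pos hma hmb, hab.mul_dvd_of_dvd_of_dvd
      (hda.trans (Nat.fib_dvd _ _ (dvd_mul_right _ _)))
      (hdb.trans (Nat.fib_dvd _ _ (dvd_mul_left _ _)))⟩

section fibEntry

variable {n m : ℕ}

theorem fibEntry_mem (hn : n ≠ 0) : fibEntry n ∈ {m | 0 < m ∧ n ∣ Nat.fib m} :=
  Nat.sInf_mem (exists_pos_dvd_fib hn)

theorem fibEntry_pos (hn : n ≠ 0) : 0 < fibEntry n := (fibEntry_mem hn).1

theorem dvd_fib_fibEntry (hn : n ≠ 0) : n ∣ Nat.fib (fibEntry n) := (fibEntry_mem hn).2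

theorem fibEntry_dvd_of_dvd_fib (h : n ∣ Nat.fib m) : fibEntry n ∣ m := by
  rcases eq_or_ne n 0 with rfl | hn
  · simp_all
  rcases eq_or_ne m 0 with rfl | hm
  · exact dvd_zero _
  rw [← Nat.gcd_eq_left_iff_dvd]
  refine le_antisymm (Nat.le_of_dvd (fibEntry_pos hn) (Nat.gcd_dvd_left _ _)) (Nat.sInf_le ?_)
  refine ⟨Nat.gcd_pos_of_pos_right _ (Nat.pos_of_ne_zero hm), ?_⟩
  rw [Nat.fib_gcd]
  exact Nat.dvd_gcd (dvd_fib_fibEntry hn) h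

theorem le_fibEntry {d : ℕ} (hn : n ≠ 0) (h : ∀ m < d, 0 < m → ¬ n ∣ Nat.fib m) :
    d ≤ fibEntry n := by
  by_contra! hlt
  exact h _ hlt (fibEntry_pos hn) (dvd_fib_fibEntry hn)

theorem fibEntry_lcm {a b : ℕ} (ha : a ≠ 0) (hb : b ≠ 0) :
    fibEntry (a.lcm b) = (fibEntry a).lcm (fibEntry b) := by
  have hab : a.lcm b ≠ 0 := Nat.lcm_ne_zero ha hb
  apply Nat.dvd_antisymm
  · refine fibEntry_dvd_of_dvd_fib (Nat.lcm_dvd ?_ ?_)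
    · exact (dvd_fib_fibEntry ha).trans (Nat.fib_dvd _ _ (Nat.dvd_lcm_left _ _))
    · exact (dvd_fib_fibEntry hb).trans (Nat.fib_dvd _ _ (Nat.dvd_lcm_right _ _))
  · refine Nat.lcm_dvd (fibEntry_dvd_of_dvd_fib ?_) (fibEntry_dvd_of_dvd_fib ?_)
    · exact (Nat.dvd_lcm_left a b).trans (dvd_fib_fibEntry hab)
    · exact (Nat.dvd_lcm_right a b).trans (dvd_fib_fibEntry hab)

theorem fibEntry_pow_dvd {p : ℕ} (h : p ∣ Nat.fib m) : ∀ e, fibEntry (p ^ e) ∣ p ^ (e - 1) * m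
  | 0 => fibEntry_dvd_of_dvd_fib (by simp)
  | e + 1 => fibEntry_dvd_of_dvd_fib (pow_succ_dvd_fib_pow_mul h e)

theorem Nat.Prime.fibEntry_dvd_sub_one_or_dvd_add_one {p : ℕ} (hp : p.Prime) (hp5 : p ≠ 5) :
    fibEntry p ∣ p - 1 ∨ fibEntry p ∣ p + 1 :=
  (hp.dvd_fib_sub_one_or_dvd_fib_add_one hp5).imp fibEntry_dvd_of_dvd_fib fibEntry_dvd_of_dvd_fib

theorem Nat.Prime.not_dvd_fibEntry_self {p : ℕ} (hp : p.Prime) (hp5 : p ≠ 5) :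
    ¬ p ∣ fibEntry p := by
  intro h
  have := hp.two_le
  rcases hp.fibEntry_dvd_sub_one_or_dvd_add_one hp5 with h' | h'
  · have := Nat.le_of_dvd (by omega) (h.trans h')
    omega
  · exact hp.one_lt.ne' (Nat.dvd_one.mp ((Nat.dvd_add_right dvd_rfl).mp (h.trans h')))

theorem Nat.Prime.le_of_dvd_fibEntry {q r : ℕ} (hq : q.Prime) (hr : r.Prime) (hr3 : 3 < r)
    (h : r ∣ fibEntry q) : r ≤ q := by
  by_cases hq5 : q = 5
  · subst hq5
    exact Nat.le_of_dvd (by norm_num) (h.trans (fibEntry_dvd_of_dvd_fib (by decide)))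
  have := hq.two_le
  rcases hq.fibEntry_dvd_sub_one_or_dvd_add_one hq5 with h' | h'
  · have := Nat.le_of_dvd (by omega) (h.trans h')
    omega
  · have := Nat.le_of_dvd (by omega) (h.trans h')
    -- `r = q + 1` would make two consecutive primes, i.e. `q = 2` and `r = 3`
    have := hq.eq_two_or_odd
    have := hr.eq_two_or_odd
    omega

theorem exists_mem_primeFactors_le_of_dvd_fibEntry {r : ℕ} (hn : n ≠ 0) (hr : r.Prime)
    (hr3 : 3 < r) (h : r ∣ fibEntry n) : ∃ q ∈ n.primeFactors, r ≤ q := by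
  induction n using Nat.recOnPosPrimePosCoprime with
  | prime_pow q e hq he =>
    refine ⟨q, by simp [hq, hq.ne_zero, he.ne'], ?_⟩
    rcases (Nat.Prime.dvd_mul hr).mp (h.trans (fibEntry_pow_dvd (dvd_fib_fibEntry hq.ne_zero) e))
      with h' | h'
    · exact Nat.le_of_dvd hq.pos (hr.dvd_of_dvd_pow h')
    · exact hq.le_of_dvd_fibEntry hr hr3 h'
  | zero => exact absurd rfl hn
  | one => exact absurd (Nat.dvd_one.mp (h.trans (fibEntry_dvd_of_dvd_fib (one_dvd _)))) hr.ne_one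
  | coprime a b ha hb hab iha ihb =>
    rw [← hab.lcm_eq_mul, fibEntry_lcm (by omega) (by omega)] at h
    rw [Nat.primeFactors_mul (by omega) (by omega)]
    rcases (Nat.Prime.dvd_mul hr).mp (h.trans (Nat.lcm_dvd_mul _ _)) with h' | h'
    · obtain ⟨q, hq, hrq⟩ := iha (by omega) h'
      exact ⟨q, Finset.mem_union_left _ hq, hrq⟩
    · obtain ⟨q, hq, hrq⟩ := ihb (by omega) h'
      exact ⟨q, Finset.mem_union_right _ hq, hrq⟩

end fibEntry

theorem primeFactors_fibEntry_le {n P : ℕ} (hn : n ≠ 0) (hP : 3 ≤ P)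
    (hmax : ∀ q ∈ n.primeFactors, q ≤ P) : ∀ r ∈ (fibEntry n).primeFactors, r ≤ P := by
  intro r hr
  by_cases hr3 : r ≤ 3
  · omega
  obtain ⟨q, hq, hrq⟩ := exists_mem_primeFactors_le_of_dvd_fibEntry hn
    (Nat.prime_of_mem_primeFactors hr) (by omega) (Nat.dvd_of_mem_primeFactors hr)
  exact hrq.trans (hmax q hq)

theorem factorization_fibEntry_lt {n P : ℕ} (hn : n ≠ 0) (hP : P.Prime) (hP5 : 5 < P)
    (hPn : P ∣ n) (hmax : ∀ q ∈ n.primeFactors, q ≤ P) :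
    (fibEntry n).factorization P < n.factorization P := by
  set e := n.factorization P
  set m := n / P ^ e
  have hnm : P ^ e * m = n := Nat.ordProj_mul_ordCompl_eq_self n P
  have hPm : ¬ P ∣ m := Nat.not_dvd_ordCompl hP hn
  have hm : m ≠ 0 := by rintro hm; simp [hm] at hPm
  have he : e ≠ 0 := (hP.factorization_pos_of_dvd hn hPn).ne'
  have hPzm : ¬ P ∣ fibEntry m := by
    intro h
    obtain ⟨q, hq, hPq⟩ := exists_mem_primeFactors_le_of_dvd_fibEntry hm hP (by omega) h
    have hqn : q ∈ n.primeFactors :=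
      Nat.primeFactors_mono (hnm ▸ dvd_mul_left m _) hn hq
    exact hPm (le_antisymm (hmax q hqn) hPq ▸ Nat.dvd_of_mem_primeFactors hq)
  by_contra! hle
  have hdvd : P ^ e ∣ fibEntry n := (hP.pow_dvd_iff_le_factorization (fibEntry_pos hn).ne').2 hle
  rw [← hnm, ← (Nat.Coprime.pow_left e (hP.coprime_iff_not_dvd.2 hPm)).lcm_eq_mul,
    fibEntry_lcm (pow_ne_zero e hP.ne_zero) hm] at hdvd
  have hPe : P ^ e ∣ P ^ (e - 1) * fibEntry P :=
    ((Nat.Coprime.pow_left e (hP.coprime_iff_not_dvd.2 hPzm)).dvd_of_dvd_mul_right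
      (hdvd.trans (Nat.lcm_dvd_mul _ _))).trans (fibEntry_pow_dvd (dvd_fib_fibEntry hP.ne_zero) e)
  obtain ⟨k, hk⟩ := Nat.exists_eq_add_one_of_ne_zero he
  rw [hk, Nat.add_sub_cancel, pow_succ] at hPe
  exact hP.not_dvd_fibEntry_self (by omega) (Nat.dvd_of_mul_dvd_mul_left (pow_pos hP.pos k) hPe)

theorem fibEntry_two_pow_mul_three_pow (a b : ℕ) :
    ∃ a' ≤ max (a - 1) 2, ∃ b' ≤ max (b - 1) 1, fibEntry (2 ^ a * 3 ^ b) = 2 ^ a' * 3 ^ b' := by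
  have hdvd : fibEntry (2 ^ a * 3 ^ b) ∣ 2 ^ max (a - 1) 2 * 3 ^ max (b - 1) 1 := by
    rw [← (Nat.Coprime.pow a b (by norm_num)).lcm_eq_mul,
      fibEntry_lcm (by positivity) (by positivity)]
    refine Nat.lcm_dvd ((fibEntry_pow_dvd (by decide : 2 ∣ Nat.fib 3) a).trans ?_)
      ((fibEntry_pow_dvd (by decide : 3 ∣ Nat.fib 4) b).trans ?_)
    · exact mul_dvd_mul (pow_dvd_pow 2 (le_max_left _ _)) (dvd_pow_self 3 (by omega))
    · rw [mul_comm, show 4 = 2 ^ 2 by rfl]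
      exact mul_dvd_mul (pow_dvd_pow 2 (le_max_right _ _)) (pow_dvd_pow 3 (le_max_left _ _))
  obtain ⟨x, y, hx, hy, hxy⟩ := Nat.dvd_mul.mp hdvd
  obtain ⟨a', ha', rfl⟩ := (Nat.dvd_prime_pow Nat.prime_two).1 hx
  obtain ⟨b', hb', rfl⟩ := (Nat.dvd_prime_pow Nat.prime_three).1 hy
  exact ⟨a', ha', b', hb', hxy.symm⟩

theorem fibEntry_mul_five_pow {d : ℕ} (hd : d.Coprime 5) (hzd : (fibEntry d).Coprime 5) (c : ℕ) :
    ∃ c' ≤ c, fibEntry (d * 5 ^ c) = fibEntry d * 5 ^ c' := by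
  have h5 : 5 ^ c ∣ Nat.fib (5 ^ c) := by
    cases c with
    | zero => simp
    | succ c => simpa [pow_succ] using pow_succ_dvd_fib_pow_mul (by decide : 5 ∣ Nat.fib 5) c
  obtain ⟨c', hc', hz⟩ := (Nat.dvd_prime_pow Nat.prime_five).1 (fibEntry_dvd_of_dvd_fib h5)
  refine ⟨c', hc', ?_⟩
  rw [← (hd.pow_right c).lcm_eq_mul, fibEntry_lcm (by rintro rfl; norm_num at hd) (by positivity),
    hz, (hzd.pow_right c').lcm_eq_mul]

theorem le_fibEntry_of_dvd_twelve {d : ℕ} (hd : d ∣ 12) : d ≤ fibEntry d :=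
  le_fibEntry (by rintro rfl; norm_num at hd) <| by
    have : ∀ d ∈ Nat.divisors 12, ∀ m < d, 0 < m → ¬ d ∣ Nat.fib m := by decide
    exact this d (by simp [hd])

theorem coprime_two_pow_mul_three_pow_five (a b : ℕ) : (2 ^ a * 3 ^ b).Coprime 5 :=
  Nat.Coprime.mul_left (Nat.Coprime.pow_left _ (by norm_num)) (Nat.Coprime.pow_left _ (by norm_num))

theorem reachesFixedPt_fibEntry_two_pow_mul_three_pow_mul_five_pow (a b c : ℕ) :
    ReachesFixedPt fibEntry (2 ^ a * 3 ^ b * 5 ^ c) := by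
  refine ReachesFixedPt.of_descent (fun i : ℕ × ℕ × ℕ => 2 ^ i.1 * 3 ^ i.2.1 * 5 ^ i.2.2)
    (fun i => toLex (i.1 - 2 + (i.2.1 - 1), toLex (i.2.2, 12 - 2 ^ i.1 * 3 ^ i.2.1)))
    (s := Set.univ) ?_ (Set.mem_univ (a, b, c))
  rintro ⟨a, b, c⟩ -
  obtain ⟨a', ha', b', hb', hd⟩ := fibEntry_two_pow_mul_three_pow a b
  obtain ⟨c', hc', hn⟩ := fibEntry_mul_five_pow (coprime_two_pow_mul_three_pow_five a b)
    (hd ▸ coprime_two_pow_mul_three_pow_five a' b') c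
  rw [hd] at hn
  by_cases hfix : 2 ^ a' * 3 ^ b' * 5 ^ c' = 2 ^ a * 3 ^ b * 5 ^ c
  · exact .inl (IsFixedPt.reachesFixedPt (hn.trans hfix))
  refine .inr ⟨(a', b', c'), trivial, hn, ?_⟩
  simp only [Prod.Lex.toLex_lt_toLex]
  by_cases hab : a ≤ 2 ∧ b ≤ 1
  · have hle : 2 ^ a * 3 ^ b ≤ 2 ^ a' * 3 ^ b' := hd ▸ le_fibEntry_of_dvd_twelve
      (mul_dvd_mul (pow_dvd_pow 2 hab.1) (pow_dvd_pow 3 hab.2))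
    have hle12 : 2 ^ a' * 3 ^ b' ≤ 12 := Nat.le_of_dvd (by norm_num)
      (mul_dvd_mul (pow_dvd_pow 2 (by omega : a' ≤ 2)) (pow_dvd_pow 3 (by omega : b' ≤ 1)))
    have : c' < c ∨ 2 ^ a * 3 ^ b < 2 ^ a' * 3 ^ b' := by
      by_contra! h
      exact hfix (by rw [le_antisymm hc' h.1, le_antisymm h.2 hle])
    omega
  · omega

theorem exists_eq_two_pow_mul_three_pow_mul_five_pow {n : ℕ} (hn : n ≠ 0)
    (h : ∀ q ∈ n.primeFactors, q ≤ 5) : ∃ a b c, n = 2 ^ a * 3 ^ b * 5 ^ c := by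
  refine ⟨n.factorization 2, n.factorization 3, n.factorization 5, ?_⟩
  have hsupp : n.factorization.support ⊆ {2, 3, 5} := by
    intro q hq
    rw [Nat.support_factorization] at hq
    have := h q hq
    have := (Nat.prime_of_mem_primeFactors hq).two_le
    have : q ≠ 4 := by rintro rfl; exact absurd (Nat.prime_of_mem_primeFactors hq) (by decide)
    simp only [Finset.mem_insert, Finset.mem_singleton]
    omega
  conv_lhs => rw [← Nat.prod_factorization_pow_eq_self hn]
  rw [Finsupp.prod_of_support_subset _ hsupp _ (fun _ _ => pow_zero _),
    Finset.prod_insert (by decide), Finset.prod_insert (by decide), Finset.prod_singleton,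
    mul_assoc]

theorem reachesFixedPt_fibEntry_of_primeFactors_le (P : ℕ) {n : ℕ} (hn : n ≠ 0)
    (hP : ∀ q ∈ n.primeFactors, q ≤ P) : ReachesFixedPt fibEntry n := by
  induction P using Nat.strong_induction_on generalizing n with
  | _ P ih =>
  by_cases hP5 : P ≤ 5
  · obtain ⟨a, b, c, rfl⟩ :=
      exists_eq_two_pow_mul_three_pow_mul_five_pow hn fun q hq => (hP q hq).trans hP5
    exact reachesFixedPt_fibEntry_two_pow_mul_three_pow_mul_five_pow a b c
  refine ReachesFixedPt.of_descent id (fun n => n.factorization P)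
    (s := {n | n ≠ 0 ∧ ∀ q ∈ n.primeFactors, q ≤ P}) ?_ ⟨hn, hP⟩
  rintro n ⟨hn, hP⟩
  by_cases hPn : P ∈ n.primeFactors
  · refine .inr ⟨fibEntry n, ⟨(fibEntry_pos hn).ne', primeFactors_fibEntry_le hn (by omega) hP⟩,
      rfl, factorization_fibEntry_lt hn (Nat.prime_of_mem_primeFactors hPn) (by omega)
        (Nat.dvd_of_mem_primeFactors hPn) hP⟩
  · refine .inl (ih (P - 1) (by omega) hn fun q hq => ?_)
    have : q ≠ P := by rintro rfl; exact hPn hq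
    have := hP q hq
    omega

theorem fibEntry_iterate_eventually_fixed (k : ℕ) (hk : 0 < k) :
    ∃ i : ℕ, fibEntry (fibEntry^[i] k) = fibEntry^[i] k :=
  reachesFixedPt_fibEntry_of_primeFactors_le k hk.ne' fun _ hq => Nat.le_of_mem_primeFactors hq
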